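/- Let N ≥ 1 and p ∈ [0, 1]. For each bitstring k ∈ {0,1}^N define the dephasing Kraus operator S_k := p^{(N − h(k))/2} (1 − p)^{h(k)/2} · ⊗_{i=1}^N σz^{k_i} on (ℂ²)^{⊗N}, where h(k) is the Hamming weight of k, σz^0 = I and σz^1 = σz. Let S_x := Σ_{i=1}^N σx^{(i)} and S_z := Σ_{i=1}^N σz^{(i)}. Then Σ_{l, k ∈ {0,1}^N} S_l · ⟨l| S_x² |k⟩ · S_k = N (1 − 4p(1−p)) · I + 4p(1−p) · S_z², where ⟨l| S_x² |k⟩ denotes the matrix element of S_x² between the computational basis vectors |l⟩ and |k⟩. -/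

import Mathlib

open Matrix

/-- The Pauli matrices `σx` and `σz`. -/
def pauliX : Matrix (Fin 2) (Fin 2) ℂ := !![0, 1; 1, 0]
def pauliZ : Matrix (Fin 2) (Fin 2) ℂ := !![1, 0; 0, -1]

/-- `σ_A^{(i)}` : the one-qubit operator `A` acting on the `i`-th tensor factor of
`(ℂ²)^{⊗N}` and the identity elsewhere, written as a matrix indexed by bitstrings. -/
def pauliAt (N : ℕ) (i : ℕ) (A : Matrix (Fin 2) (Fin 2) ℂ) :
    Matrix (Fin N → Fin 2) (Fin N → Fin 2) ℂ :=
  Matrix.of fun x y =>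
    ∏ j : Fin N, if (j : ℕ) = i then A (x j) (y j) else (if x j = y j then 1 else 0)

/-- The `N`-fold tensor product `A_1 ⊗ … ⊗ A_N` of one-qubit operators, as a matrix
indexed by bitstrings. -/
def kronN (N : ℕ) (A : Fin N → Matrix (Fin 2) (Fin 2) ℂ) :
    Matrix (Fin N → Fin 2) (Fin N → Fin 2) ℂ :=
  Matrix.of fun x y => ∏ i : Fin N, A i (x i) (y i)

/-- The Hamming weight of a bitstring. -/
def hamWt (N : ℕ) (k : Fin N → Fin 2) : ℕ := ∑ i : Fin N, (k i : ℕ)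

/-- The dephasing Kraus operator
`S_k = p^{(N-h(k))/2} (1-p)^{h(k)/2} ⊗_{i=1}^N σz^{k_i}`. -/
noncomputable def krausOp (N : ℕ) (p : ℝ) (k : Fin N → Fin 2) :
    Matrix (Fin N → Fin 2) (Fin N → Fin 2) ℂ :=
  ((Real.sqrt (p ^ (N - hamWt N k)) * Real.sqrt ((1 - p) ^ hamWt N k) : ℝ) : ℂ) •
    kronN N (fun i => if k i = 1 then pauliZ else 1)

/-! The map `A ↦ ∑_{l,k} A_{lk} S_l S_k` is linear in `A`, and since
`S_k = ⊗_m K_{k_m}` with the one-qubit Kraus operators `K_0 = √p I`, `K_1 = √(1-p) σz`,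
it sends a product operator `⊗_m A_m` to `⊗_m φ(A_m)`, where `φ(A) = ∑_{x,y} A_{xy} K_x K_y`.
As `φ(I) = I` and `φ(σx) = 2√(p(1-p)) σz`, the term `σx^{(i)} σx^{(j)}` of `S_x²` is sent to
`4p(1-p) σz^{(i)} σz^{(j)}` when `i ≠ j` and to `I` when `i = j`; summing over `i, j` gives
the identity. -/

open Finset

section Sandwich

variable {ι n R : Type*} [Fintype ι] [Fintype n] [CommSemiring R]

def krausSandwich (K : ι → Matrix n n R) : Matrix ι ι R →ₗ[R] Matrix n n R where
  toFun A := ∑ l, ∑ k, A l k • (K l * K k)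
  map_add' A B := by simp only [Matrix.add_apply, add_smul, sum_add_distrib]
  map_smul' c A := by
    simp only [Matrix.smul_apply, smul_eq_mul, mul_smul, smul_sum, RingHom.id_apply]

theorem krausSandwich_apply (K : ι → Matrix n n R) (A : Matrix ι ι R) :
    krausSandwich K A = ∑ l, ∑ k, A l k • (K l * K k) := rfl

theorem krausSandwich_one [DecidableEq ι] (K : ι → Matrix n n R) :
    krausSandwich K 1 = ∑ l, K l * K l := by
  simp [krausSandwich_apply, one_apply, ite_smul]

end Sandwich

theorem Pi.comp_mulSingle_mul_mulSingle {ι M M' : Type*} [DecidableEq ι] [MulOneClass M]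
    [MulOneClass M'] {f : M → M'} (hf : f 1 = 1) {i j : ι} (hij : i ≠ j) (a b : M) :
    (fun m => f ((Pi.mulSingle i a * Pi.mulSingle j b : ι → M) m)) =
      Pi.mulSingle i (f a) * Pi.mulSingle j (f b) := by
  funext m
  by_cases hi : m = i
  · subst hi; simp [hij]
  · by_cases hj : m = j
    · subst hj; simp [hi]
    · simp [hi, hj, hf]

theorem pauliX_mul_self : pauliX * pauliX = 1 := by
  ext a b; fin_cases a <;> fin_cases b <;> simp [pauliX, mul_apply, one_apply]

theorem pauliZ_mul_self : pauliZ * pauliZ = 1 := by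
  ext a b; fin_cases a <;> fin_cases b <;> simp [pauliZ, mul_apply, one_apply]

section Kron

variable {N : ℕ}

theorem kronN_mul (A B : Fin N → Matrix (Fin 2) (Fin 2) ℂ) :
    kronN N A * kronN N B = kronN N (A * B) := by
  ext x y
  simp only [kronN, mul_apply, of_apply, Pi.mul_apply, ← prod_mul_distrib]
  exact (Fintype.prod_sum fun m z => A m (x m) z * B m z (y m)).symm

theorem kronN_one : kronN N 1 = 1 := by
  ext x y
  simp only [kronN, of_apply, Pi.one_apply, one_apply]
  split_ifs with h
  · simp [h]
  · obtain ⟨m, hm⟩ := Function.ne_iff.mp h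
    exact prod_eq_zero (mem_univ m) (if_neg hm)

theorem kronN_smul (c : Fin N → ℂ) (A : Fin N → Matrix (Fin 2) (Fin 2) ℂ) :
    kronN N (fun m => c m • A m) = (∏ m, c m) • kronN N A := by
  ext x y
  simp [kronN, prod_mul_distrib]

theorem pauliAt_eq_kronN_mulSingle (i : Fin N) (A : Matrix (Fin 2) (Fin 2) ℂ) :
    pauliAt N i A = kronN N (Pi.mulSingle i A) := by
  ext x y
  simp only [pauliAt, kronN, of_apply, Pi.mulSingle_apply, Fin.val_inj]
  refine prod_congr rfl fun m _ => ?_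
  split_ifs <;> simp [one_apply, *]

theorem pauliAt_mul_self (i : Fin N) {A : Matrix (Fin 2) (Fin 2) ℂ} (hA : A * A = 1) :
    pauliAt N i A * pauliAt N i A = 1 := by
  rw [pauliAt_eq_kronN_mulSingle, kronN_mul, ← Pi.mulSingle_mul, hA, Pi.mulSingle_one, kronN_one]

theorem kronN_mulSingle_smul (i : Fin N) (c : ℂ) (A : Matrix (Fin 2) (Fin 2) ℂ) :
    kronN N (Pi.mulSingle i (c • A)) = c • kronN N (Pi.mulSingle i A) := by
  have hfactor : Pi.mulSingle i (c • A) =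
      fun m => (Pi.mulSingle i c : Fin N → ℂ) m • (Pi.mulSingle i A : Fin N → _) m := by
    funext m
    by_cases hm : m = i
    · subst hm; simp
    · simp [hm]
  rw [hfactor, kronN_smul, prod_pi_mulSingle', if_pos (mem_univ i)]

theorem krausSandwich_kronN (K : Fin 2 → Matrix (Fin 2) (Fin 2) ℂ)
    (A : Fin N → Matrix (Fin 2) (Fin 2) ℂ) :
    krausSandwich (fun l : Fin N → Fin 2 => kronN N fun m => K (l m)) (kronN N A) =
      kronN N fun m => krausSandwich K (A m) := by
  ext a b
  simp only [krausSandwich_apply, kronN_mul]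
  simp only [Matrix.sum_apply, Matrix.smul_apply, kronN, of_apply, Pi.mul_apply, smul_eq_mul,
    ← prod_mul_distrib]
  rw [Fintype.prod_sum]
  refine Fintype.sum_congr _ _ fun l => ?_
  rw [Fintype.prod_sum]

end Kron

theorem Real.sqrt_pow {x : ℝ} (hx : 0 ≤ x) (n : ℕ) : √(x ^ n) = √x ^ n := by
  rw [← Real.sq_sqrt hx, ← pow_mul, mul_comm, pow_mul, Real.sqrt_sq (by positivity),
    Real.sq_sqrt hx]

noncomputable def dephasingKraus (p : ℝ) (x : Fin 2) : Matrix (Fin 2) (Fin 2) ℂ :=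
  ((if x = 1 then √(1 - p) else √p : ℝ) : ℂ) • if x = 1 then pauliZ else 1

theorem hamWt_eq_card (N : ℕ) (k : Fin N → Fin 2) : hamWt N k = #{m | k m = 1} := by
  rw [hamWt, card_filter]
  refine sum_congr rfl fun m _ => ?_
  generalize k m = x
  fin_cases x <;> rfl

theorem sqrt_pow_mul_sqrt_pow_hamWt {N : ℕ} {p : ℝ} (hp0 : 0 ≤ p) (hp1 : p ≤ 1)
    (k : Fin N → Fin 2) :
    √(p ^ (N - hamWt N k)) * √((1 - p) ^ hamWt N k) =
      ∏ m, (if k m = 1 then √(1 - p) else √p) := by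
  have hcard : #{m | ¬k m = 1} = N - hamWt N k := by
    have := card_filter_add_card_filter_not (s := univ) (fun m => k m = 1)
    rw [card_univ, Fintype.card_fin] at this
    rw [hamWt_eq_card]
    omega
  rw [prod_ite, prod_const, prod_const, ← hamWt_eq_card, hcard,
    Real.sqrt_pow hp0, Real.sqrt_pow (sub_nonneg.mpr hp1), mul_comm]

theorem krausOp_eq_kronN {N : ℕ} {p : ℝ} (hp0 : 0 ≤ p) (hp1 : p ≤ 1) (k : Fin N → Fin 2) :
    krausOp N p k = kronN N fun m => dephasingKraus p (k m) := by
  simp only [krausOp, dephasingKraus]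
  rw [kronN_smul, sqrt_pow_mul_sqrt_pow_hamWt hp0 hp1, Complex.ofReal_prod]

theorem sum_dephasingKraus_mul_self {p : ℝ} (hp0 : 0 ≤ p) (hp1 : p ≤ 1) :
    ∑ x, dephasingKraus p x * dephasingKraus p x = 1 := by
  simp only [Fin.sum_univ_two, dephasingKraus, zero_ne_one, if_false,
    if_true, smul_mul_smul_comm, one_mul, pauliZ_mul_self, ← add_smul, ← Complex.ofReal_mul,
    Real.mul_self_sqrt hp0, Real.mul_self_sqrt (sub_nonneg.mpr hp1), ← Complex.ofReal_add,
    add_sub_cancel, Complex.ofReal_one, one_smul]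

theorem krausSandwich_dephasingKraus_one {p : ℝ} (hp0 : 0 ≤ p) (hp1 : p ≤ 1) :
    krausSandwich (dephasingKraus p) 1 = 1 := by
  rw [krausSandwich_one, sum_dephasingKraus_mul_self hp0 hp1]

theorem krausSandwich_dephasingKraus_pauliX (p : ℝ) :
    krausSandwich (dephasingKraus p) pauliX = ((2 * √p * √(1 - p) : ℝ) : ℂ) • pauliZ := by
  simp only [krausSandwich_apply, Fin.sum_univ_two, pauliX, dephasingKraus]
  simp only [of_apply, cons_val', cons_val_zero, cons_val_one, empty_val', cons_val_fin_one,
    Fin.isValue, zero_ne_one, if_false, if_true, zero_smul, one_smul, zero_add, add_zero,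
    smul_mul_smul_comm, mul_one, one_mul, ← add_smul]
  congr 1
  push_cast
  ring

section Dephasing

variable {N : ℕ} {p : ℝ}

theorem krausSandwich_krausOp (hp0 : 0 ≤ p) (hp1 : p ≤ 1) :
    krausSandwich (krausOp N p) =
      krausSandwich fun l : Fin N → Fin 2 => kronN N fun m => dephasingKraus p (l m) := by
  congr 1
  exact funext (krausOp_eq_kronN hp0 hp1)

theorem krausSandwich_krausOp_one (hp0 : 0 ≤ p) (hp1 : p ≤ 1) :
    krausSandwich (krausOp N p) 1 = 1 := by
  rw [krausSandwich_krausOp hp0 hp1, ← kronN_one, krausSandwich_kronN]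
  simp only [Pi.one_apply, krausSandwich_dephasingKraus_one hp0 hp1]
  rfl

theorem krausSandwich_krausOp_pauliX_mul_pauliX (hp0 : 0 ≤ p) (hp1 : p ≤ 1) {i j : Fin N}
    (hij : i ≠ j) :
    krausSandwich (krausOp N p) (pauliAt N i pauliX * pauliAt N j pauliX) =
      ((4 * p * (1 - p) : ℝ) : ℂ) • (pauliAt N i pauliZ * pauliAt N j pauliZ) := by
  rw [krausSandwich_krausOp hp0 hp1, pauliAt_eq_kronN_mulSingle, pauliAt_eq_kronN_mulSingle,
    kronN_mul, krausSandwich_kronN,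
    Pi.comp_mulSingle_mul_mulSingle (krausSandwich_dephasingKraus_one hp0 hp1) hij,
    krausSandwich_dephasingKraus_pauliX, ← kronN_mul, kronN_mulSingle_smul, kronN_mulSingle_smul,
    smul_mul_smul_comm, pauliAt_eq_kronN_mulSingle, pauliAt_eq_kronN_mulSingle]
  congr 1
  have hsq : √p * √p * (√(1 - p) * √(1 - p)) = p * (1 - p) := by
    rw [Real.mul_self_sqrt hp0, Real.mul_self_sqrt (sub_nonneg.mpr hp1)]
  rw [← Complex.ofReal_mul]
  congr 1
  linear_combination 4 * hsq

theorem krausSandwich_krausOp_pauliX_mul (hp0 : 0 ≤ p) (hp1 : p ≤ 1) (i j : Fin N) :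
    krausSandwich (krausOp N p) (pauliAt N i pauliX * pauliAt N j pauliX) =
      ((4 * p * (1 - p) : ℝ) : ℂ) • (pauliAt N i pauliZ * pauliAt N j pauliZ) +
        if i = j then ((1 - 4 * p * (1 - p) : ℝ) : ℂ) • 1 else 0 := by
  obtain rfl | hij := eq_or_ne i j
  · rw [pauliAt_mul_self i pauliX_mul_self, pauliAt_mul_self i pauliZ_mul_self,
      krausSandwich_krausOp_one hp0 hp1, if_pos rfl, ← add_smul, ← Complex.ofReal_add,
      add_sub_cancel, Complex.ofReal_one, one_smul]
  · rw [if_neg hij, add_zero, krausSandwich_krausOp_pauliX_mul_pauliX hp0 hp1 hij]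

end Dephasing

theorem kraus_sandwich_Sx_sq_general (N : ℕ) (p : ℝ) (hp0 : 0 ≤ p) (hp1 : p ≤ 1) :
    ∑ l : Fin N → Fin 2, ∑ k : Fin N → Fin 2,
      (((∑ i : Fin N, pauliAt N i.1 pauliX) * (∑ i : Fin N, pauliAt N i.1 pauliX)) l k) •
        (krausOp N p l * krausOp N p k) =
      (((N : ℝ) * (1 - 4 * p * (1 - p)) : ℝ) : ℂ) • (1 : Matrix (Fin N → Fin 2) (Fin N → Fin 2) ℂ) +
        ((4 * p * (1 - p) : ℝ) : ℂ) •
          ((∑ i : Fin N, pauliAt N i.1 pauliZ) * (∑ i : Fin N, pauliAt N i.1 pauliZ)) := by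
  rw [← krausSandwich_apply, Fintype.sum_mul_sum]
  simp only [map_sum, krausSandwich_krausOp_pauliX_mul hp0 hp1, sum_add_distrib, sum_ite_eq,
    mem_univ, if_true, sum_const, card_univ, Fintype.card_fin, Fintype.sum_mul_sum, ← smul_sum]
  rw [add_comm, ← Nat.cast_smul_eq_nsmul ℂ, smul_smul]
  push_cast
  rfl

/-- With `S_x := Σ σx^{(i)}`, `S_z := Σ σz^{(i)}` and the dephasing
Kraus operators `S_k`, one has
`Σ_{l,k} S_l ⟨l|S_x²|k⟩ S_k = N(1 - 4p(1-p)) I + 4p(1-p) S_z²`. -/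
theorem kraus_sandwich_Sx_sq (N : ℕ) (hN : 1 ≤ N) (p : ℝ) (hp0 : 0 ≤ p) (hp1 : p ≤ 1) :
    ∑ l : Fin N → Fin 2, ∑ k : Fin N → Fin 2,
      (((∑ i : Fin N, pauliAt N i.1 pauliX) * (∑ i : Fin N, pauliAt N i.1 pauliX)) l k) •
        (krausOp N p l * krausOp N p k) =
      (((N : ℝ) * (1 - 4 * p * (1 - p)) : ℝ) : ℂ) • (1 : Matrix (Fin N → Fin 2) (Fin N → Fin 2) ℂ) +
        ((4 * p * (1 - p) : ℝ) : ℂ) •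
          ((∑ i : Fin N, pauliAt N i.1 pauliZ) * (∑ i : Fin N, pauliAt N i.1 pauliZ)) :=
  kraus_sandwich_Sx_sq_general N p hp0 hp1
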